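/- Let ε > 0, let N be a positive integer, let E and Ē be nonempty finite sets, and for each n ∈ {1, …, N} let s_n : E → ℝ and t_n : Ē → ℝ be functions with s_n(e) ≥ 0 and t_n(ē) ≥ 0 everywhere. Suppose there exist an edge e ∈ E and indices m, n with s_m(e) ≠ s_n(e). Then, with L(s, t) = (1/|E|)·∑_{e ∈ E} (−log(1 − exp(−ε − s(e)))) + (1/|Ē|)·∑_{ē ∈ Ē} t(ē) and s̄ = (1/N)·∑_n s_n, t̄ = (1/N)·∑_n t_n, the inequality is strict: L(s̄, t̄) < (1/N)·∑_{n=1}^{N} L(s_n, t_n). (The positive-pair term of the Bernoulli–Poisson loss is strictly convex in the similarity score, so the fusion inequality is strict whenever the individual similarity scores disagree on some connected pair.) -/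

import Mathlib

/-!
On connected pairs the loss is `g (ε + s)` with `g x = -log (1 - exp (-x))`, whose derivative
`-1 / (exp x - 1)` is strictly increasing on `(0, ∞)`; so `g` is strictly convex there. Jensen's
inequality for the uniform average over the `N` models then holds on every connected pair and is
strict on one where the scores disagree, while the term in the unconnected pairs is linear and
averages exactly.
-/

open Real Set Finset

lemma hasDerivAt_neg_log_one_sub_exp_neg {x : ℝ} (hx : 0 < x) :
    HasDerivAt (fun x : ℝ => -log (1 - exp (-x))) (-(exp (-x) / (1 - exp (-x)))) x := by
  have hexp : HasDerivAt (fun x : ℝ => 1 - exp (-x)) (exp (-x)) x := by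
    simpa using ((hasDerivAt_neg x).exp).const_sub 1
  have hne : 1 - exp (-x) ≠ 0 := by
    have := exp_lt_one_iff.mpr (neg_neg_of_pos hx)
    linarith
  exact (hexp.log hne).neg

lemma strictConvexOn_neg_log_one_sub_exp_neg :
    StrictConvexOn ℝ (Ioi 0) (fun x : ℝ => -log (1 - exp (-x))) := by
  refine StrictMonoOn.strictConvexOn_of_deriv (convex_Ioi 0)
    (fun x hx => (hasDerivAt_neg_log_one_sub_exp_neg hx).continuousAt.continuousWithinAt) ?_
  rw [interior_Ioi]
  intro x hx y hy hxy
  rw [(hasDerivAt_neg_log_one_sub_exp_neg hx).deriv, (hasDerivAt_neg_log_one_sub_exp_neg hy).deriv,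
    neg_lt_neg_iff]
  -- `u ↦ u / (1 - u)` is increasing on `(0, 1)` and `exp (-y) < exp (-x)`
  have hexp : exp (-y) < exp (-x) := exp_lt_exp.mpr (neg_lt_neg hxy)
  have hx1 : exp (-x) < 1 := exp_lt_one_iff.mpr (neg_neg_of_pos hx)
  rw [div_lt_div_iff₀ (by linarith) (by linarith)]
  nlinarith

lemma strictConvexOn_neg_log_one_sub_exp_sub (c : ℝ) :
    StrictConvexOn ℝ (Ioi (-c)) (fun x : ℝ => -log (1 - exp (-c - x))) := by
  have h := strictConvexOn_neg_log_one_sub_exp_neg.translate_right c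
  rw [preimage_const_add_Ioi, zero_sub] at h
  simpa only [Function.comp_def, neg_add'] using h

lemma sum_const_one_div_card (ι : Type*) [Fintype ι] [Nonempty ι] :
    ∑ _i : ι, 1 / (Fintype.card ι : ℝ) = 1 := by
  rw [sum_const, card_univ, nsmul_eq_mul]
  field_simp

section UniformAverage

variable {ι : Type*} [Fintype ι] {D : Set ℝ} {f : ℝ → ℝ} {p : ι → ℝ}

theorem ConvexOn.map_avg_le [Nonempty ι] (hf : ConvexOn ℝ D f) (hp : ∀ i, p i ∈ D) :
    f (1 / Fintype.card ι * ∑ i, p i) ≤ 1 / Fintype.card ι * ∑ i, f (p i) := by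
  simpa only [smul_eq_mul, ← mul_sum] using
    hf.map_sum_le (fun _ _ => by positivity) (sum_const_one_div_card ι) (fun i _ => hp i)

theorem StrictConvexOn.map_avg_lt (hf : StrictConvexOn ℝ D f) (hp : ∀ i, p i ∈ D)
    (hne : ∃ j k, p j ≠ p k) :
    f (1 / Fintype.card ι * ∑ i, p i) < 1 / Fintype.card ι * ∑ i, f (p i) := by
  obtain ⟨j, k, hjk⟩ := hne
  have : Nonempty ι := ⟨j⟩
  simpa only [smul_eq_mul, ← mul_sum] using
    hf.map_sum_lt (fun _ _ => by positivity) (sum_const_one_div_card ι) (fun i _ => hp i)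
      ⟨j, mem_univ j, k, mem_univ k, hjk⟩

end UniformAverage

theorem bp_loss_fused_lt_avg_general
    (ε : ℝ) (hε : 0 < ε) (N : ℕ)
    (E Ebar : Type*) [Fintype E] [Fintype Ebar]
    (s : Fin N → E → ℝ) (t : Fin N → Ebar → ℝ)
    (hs : ∀ n e, 0 ≤ s n e)
    (hdisagree : ∃ (e : E) (m n : Fin N), s m e ≠ s n e)
    (L : (E → ℝ) → (Ebar → ℝ) → ℝ)
    (hL : ∀ (s' : E → ℝ) (t' : Ebar → ℝ),
      L s' t' = (1 / (Fintype.card E : ℝ)) *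
          ∑ e : E, -Real.log (1 - Real.exp (-ε - s' e)) +
        (1 / (Fintype.card Ebar : ℝ)) * ∑ eb : Ebar, t' eb) :
    L (fun e => (1 / (N : ℝ)) * ∑ n, s n e)
        (fun eb => (1 / (N : ℝ)) * ∑ n, t n eb) <
      (1 / (N : ℝ)) * ∑ n, L (s n) (t n) := by
  obtain ⟨e₀, m, n, hmn⟩ := hdisagree
  have : Nonempty (Fin N) := ⟨m⟩
  have : Nonempty E := ⟨e₀⟩
  set f : ℝ → ℝ := fun x => -log (1 - exp (-ε - x))
  have hf : StrictConvexOn ℝ (Ioi (-ε)) f := strictConvexOn_neg_log_one_sub_exp_sub ε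
  have hmem : ∀ e n, s n e ∈ Ioi (-ε) := fun e n => (neg_neg_of_pos hε).trans_le (hs n e)
  have hjensen : ∑ e, f (1 / N * ∑ n, s n e) < ∑ e, 1 / N * ∑ n, f (s n e) := by
    refine sum_lt_sum (fun e _ => ?_) ⟨e₀, mem_univ e₀, ?_⟩
    · simpa only [Fintype.card_fin] using hf.convexOn.map_avg_le (hmem e)
    · simpa only [Fintype.card_fin] using hf.map_avg_lt (hmem e₀) ⟨m, n, hmn⟩
  calc _ = 1 / Fintype.card E * ∑ e, f (1 / N * ∑ n, s n e) +
        1 / Fintype.card Ebar * ∑ eb, 1 / N * ∑ n, t n eb := hL _ _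
    _ < 1 / Fintype.card E * ∑ e, 1 / N * ∑ n, f (s n e) +
        1 / Fintype.card Ebar * ∑ eb, 1 / N * ∑ n, t n eb := by gcongr
    _ = 1 / N * ∑ n, L (s n) (t n) := by
      simp only [hL, mul_add, mul_sum, sum_add_distrib]
      rw [sum_comm (γ := E), sum_comm (γ := Ebar)]
      simp only [f, mul_left_comm]

/-- Strict risk reduction with fusion (overlapping community detection case):
if the individual similarity scores disagree on some connected pair, then the
Bernoulli–Poisson loss of the uniformly averaged similarity families is
strictly less than the average of the individual losses. -/
theorem bp_loss_fused_lt_avg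
    (ε : ℝ) (hε : 0 < ε) (N : ℕ) (hN : 0 < N)
    (E Ebar : Type*) [Fintype E] [Nonempty E] [Fintype Ebar] [Nonempty Ebar]
    (s : Fin N → E → ℝ) (t : Fin N → Ebar → ℝ)
    (hs : ∀ n e, 0 ≤ s n e) (ht : ∀ n eb, 0 ≤ t n eb)
    (hdisagree : ∃ (e : E) (m n : Fin N), s m e ≠ s n e)
    (L : (E → ℝ) → (Ebar → ℝ) → ℝ)
    (hL : ∀ (s' : E → ℝ) (t' : Ebar → ℝ),
      L s' t' = (1 / (Fintype.card E : ℝ)) *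
          ∑ e : E, -Real.log (1 - Real.exp (-ε - s' e)) +
        (1 / (Fintype.card Ebar : ℝ)) * ∑ eb : Ebar, t' eb) :
    L (fun e => (1 / (N : ℝ)) * ∑ n, s n e)
        (fun eb => (1 / (N : ℝ)) * ∑ n, t n eb) <
      (1 / (N : ℝ)) * ∑ n, L (s n) (t n) :=
  bp_loss_fused_lt_avg_general ε hε N E Ebar s t hs hdisagree L hL
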